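/- arXiv:1509.08108 — 2 statements merged into one kernel-verified Lean document; each statement's English description precedes it below -/
import Mathlib

section
/- If T is a random variable with MOKw-G survival function S(t) = α(1-G(t)^a)^b/(1-(1-α)(1-G(t)^a)^b), then E[(1-(1-α)(1-G(T)^a)^b)^v] = -α log α/(1-α) when v = 1, and = α(1-α^{v-1})/((1-α)(v-1)) for integer v ≥ 2, provided 0 < α and α ≠ 1. -/
/-!
Since `G` is monotone with `G' = g ≥ 0`, the substitution `x = G t` (valid for monotone, not
necessarily injective, differentiable maps) turns the moment into `∫₀¹ ψ(x)^v h(x) dx`, where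
`ψ(x) = 1 - (1-α)(1-x^a)^b` and `h` is the MOKw density for uniform `G`; in particular the moment
does not depend on `G`. On `(0,1)` one has `h = α/(1-α) · ψ'/ψ²`, so `ψ^v h` has the antiderivative
`α/(1-α) · log ψ` for `v = 1` and `α/((1-α)(v-1)) · ψ^(v-1)` for `v ≥ 2`, continuous on `[0,1]`
with `ψ(0) = α`, `ψ(1) = 1`. The integrand is nonnegative, which makes it integrable on `[0,1]`
even though `ψ'` may blow up at the endpoints.
-/

open MeasureTheory Set Filter Topology

theorem integral_deriv_smul_comp_of_tendsto {E : Type*} [NormedAddCommGroup E] [NormedSpace ℝ E]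
    {G g : ℝ → ℝ} {l u : ℝ} (hG : ∀ t, HasDerivAt G (g t) t) (hg : ∀ t, 0 ≤ g t)
    (hbot : Tendsto G atBot (𝓝 l)) (htop : Tendsto G atTop (𝓝 u)) (h : ℝ → E) :
    ∫ t, g t • h (G t) = ∫ x in l..u, h x := by
  have hmono : Monotone G := monotone_of_hasDerivAt_nonneg hG hg
  have hcont : Continuous G := continuous_iff_continuousAt.2 fun t => (hG t).continuousAt
  have hrange_sub : range G ⊆ Icc l u := by
    rintro _ ⟨t, rfl⟩
    exact ⟨hmono.le_of_tendsto hbot t, hmono.ge_of_tendsto htop t⟩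
  have hsub_range : Ioo l u ⊆ range G := fun y hy =>
    mem_range_of_exists_le_of_exists_ge hcont
      ((hbot.eventually (gt_mem_nhds hy.1)).exists.imp fun _ => le_of_lt)
      ((htop.eventually (lt_mem_nhds hy.2)).exists.imp fun _ => le_of_lt)
  have hlu : l ≤ u := (hrange_sub (mem_range_self 0)).1.trans (hrange_sub (mem_range_self 0)).2
  have hae : range G =ᵐ[volume] Icc l u :=
    (LE.le.eventuallyLE hrange_sub).antisymm
      (Ioo_ae_eq_Icc.symm.le.trans (LE.le.eventuallyLE hsub_range))
  calc ∫ t, g t • h (G t) = ∫ x in G '' univ, h x := by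
        rw [integral_image_eq_integral_deriv_smul_of_monotoneOn MeasurableSet.univ
          (fun t _ => (hG t).hasDerivWithinAt) (hmono.monotoneOn univ), Measure.restrict_univ]
    _ = ∫ x in l..u, h x := by
        rw [image_univ, setIntegral_congr_set hae, integral_Icc_eq_integral_Ioc,
          intervalIntegral.integral_of_le hlu]

theorem intervalIntegral.integral_eq_sub_of_hasDerivAt_of_nonneg {F f : ℝ → ℝ} {a b : ℝ}
    (hab : a ≤ b) (hcont : ContinuousOn F (Icc a b))
    (hderiv : ∀ x ∈ Ioo a b, HasDerivAt F (f x) x) (hpos : ∀ x ∈ Ioo a b, 0 ≤ f x) :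
    ∫ x in a..b, f x = F b - F a :=
  integral_eq_sub_of_hasDerivAt_of_le hab hcont hderiv
    ((intervalIntegrable_iff_integrableOn_Ioc_of_le hab).2
      (integrableOn_deriv_of_nonneg hcont hderiv hpos))

/-- `U = mokwTransform α a b (G T)`. -/
noncomputable def mokwTransform (α a b x : ℝ) : ℝ := 1 - (1 - α) * (1 - x ^ a) ^ b

noncomputable def mokwUniformDensity (α a b x : ℝ) : ℝ :=
  α * a * b * x ^ (a - 1) * (1 - x ^ a) ^ (b - 1) / mokwTransform α a b x ^ 2

section

variable {α a b x : ℝ}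

lemma one_sub_rpow_nonneg (ha : 0 ≤ a) (hx : x ∈ Icc (0 : ℝ) 1) : 0 ≤ 1 - x ^ a := by
  linarith [Real.rpow_le_one hx.1 hx.2 ha]

lemma mokwTransform_pos (hα : 0 < α) (ha : 0 ≤ a) (hb : 0 ≤ b) (hx : x ∈ Icc (0 : ℝ) 1) :
    0 < mokwTransform α a b x := by
  have h₀ : 0 ≤ (1 - x ^ a) ^ b := Real.rpow_nonneg (one_sub_rpow_nonneg ha hx) b
  have h₁ : (1 - x ^ a) ^ b ≤ 1 :=
    Real.rpow_le_one (one_sub_rpow_nonneg ha hx) (by linarith [Real.rpow_nonneg hx.1 a]) hb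
  unfold mokwTransform
  rcases h₁.lt_or_eq with h | h
  · nlinarith [mul_nonneg hα.le h₀]
  · rw [h]
    linarith

lemma continuous_mokwTransform (ha : 0 ≤ a) (hb : 0 ≤ b) : Continuous (mokwTransform α a b) :=
  continuous_const.sub <| continuous_const.mul <|
    (continuous_const.sub (continuous_id.rpow_const fun _ => Or.inr ha)).rpow_const
      fun _ => Or.inr hb

lemma mokwTransform_zero (ha : a ≠ 0) : mokwTransform α a b 0 = α := by
  simp [mokwTransform, Real.zero_rpow ha]

lemma mokwTransform_one (hb : b ≠ 0) : mokwTransform α a b 1 = 1 := by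
  simp [mokwTransform, Real.zero_rpow hb]

lemma hasDerivAt_mokwTransform (ha : 0 < a) (hx : x ∈ Ioo (0 : ℝ) 1) :
    HasDerivAt (mokwTransform α a b)
      ((1 - α) * (a * b * x ^ (a - 1) * (1 - x ^ a) ^ (b - 1))) x := by
  have hxa : 1 - x ^ a ≠ 0 := (sub_pos.2 (Real.rpow_lt_one hx.1.le hx.2 ha)).ne'
  have := (((hasDerivAt_id' x).rpow_const (p := a) (Or.inl hx.1.ne')).const_sub 1).rpow_const
    (p := b) (Or.inl hxa)
  exact ((this.const_mul (1 - α)).const_sub 1).congr_deriv (by ring)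

lemma mokwUniformDensity_nonneg (hα : 0 < α) (ha : 0 < a) (hb : 0 < b) (hx : x ∈ Icc (0 : ℝ) 1) :
    0 ≤ mokwUniformDensity α a b x := by
  have := Real.rpow_nonneg (one_sub_rpow_nonneg ha.le hx) (b - 1)
  have := Real.rpow_nonneg hx.1 (a - 1)
  unfold mokwUniformDensity
  positivity

theorem integral_mokwTransform_mul_mokwUniformDensity (hα : 0 < α) (hα1 : α ≠ 1) (ha : 0 < a)
    (hb : 0 < b) :
    ∫ x in (0 : ℝ)..1, mokwTransform α a b x * mokwUniformDensity α a b x =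
      -α * Real.log α / (1 - α) := by
  have hα1' : 1 - α ≠ 0 := sub_ne_zero.2 hα1.symm
  have hψ := fun x (hx : x ∈ Icc (0 : ℝ) 1) => (mokwTransform_pos hα ha.le hb.le hx).ne'
  rw [intervalIntegral.integral_eq_sub_of_hasDerivAt_of_nonneg zero_le_one
    (F := fun x => α / (1 - α) * Real.log (mokwTransform α a b x))]
  · rw [mokwTransform_one hb.ne', mokwTransform_zero ha.ne', Real.log_one]
    ring
  · exact continuousOn_const.mul <|
      (continuous_mokwTransform ha.le hb.le).continuousOn.log hψ
  · intro x hx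
    have hψx := hψ x (Ioo_subset_Icc_self hx)
    refine (((hasDerivAt_mokwTransform ha hx).log hψx).const_mul _).congr_deriv ?_
    unfold mokwUniformDensity
    field_simp
  · exact fun x hx => mul_nonneg (mokwTransform_pos hα ha.le hb.le (Ioo_subset_Icc_self hx)).le
      (mokwUniformDensity_nonneg hα ha hb (Ioo_subset_Icc_self hx))

theorem integral_mokwTransform_pow_mul_mokwUniformDensity (hα : 0 < α) (hα1 : α ≠ 1)
    (ha : 0 < a) (hb : 0 < b) {v : ℕ} (hv : 2 ≤ v) :
    ∫ x in (0 : ℝ)..1, mokwTransform α a b x ^ v * mokwUniformDensity α a b x =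
      α * (1 - α ^ ((v : ℝ) - 1)) / ((1 - α) * ((v : ℝ) - 1)) := by
  obtain ⟨k, rfl⟩ := Nat.exists_eq_add_of_le' hv
  have hα1' : 1 - α ≠ 0 := sub_ne_zero.2 hα1.symm
  have hv' : ((k + 2 : ℕ) : ℝ) - 1 = (k + 1 : ℕ) := by push_cast; ring
  rw [hv', Real.rpow_natCast, intervalIntegral.integral_eq_sub_of_hasDerivAt_of_nonneg
    zero_le_one (F := fun x => α / ((1 - α) * (k + 1 : ℕ)) * mokwTransform α a b x ^ (k + 1))]
  · rw [mokwTransform_one hb.ne', mokwTransform_zero ha.ne', one_pow]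
    ring
  · exact continuousOn_const.mul ((continuous_mokwTransform ha.le hb.le).pow _).continuousOn
  · intro x hx
    refine (((hasDerivAt_mokwTransform ha hx).pow (k + 1)).const_mul _).congr_deriv ?_
    have := (mokwTransform_pos hα ha.le hb.le (Ioo_subset_Icc_self hx)).ne'
    unfold mokwUniformDensity
    push_cast
    field_simp
    ring
  · exact fun x hx => mul_nonneg
      (pow_nonneg (mokwTransform_pos hα ha.le hb.le (Ioo_subset_Icc_self hx)).le _)
      (mokwUniformDensity_nonneg hα ha hb (Ioo_subset_Icc_self hx))

end

theorem stmt_10_general (α a b : ℝ) (G g : ℝ → ℝ) (hα : 0 < α) (hα1 : α ≠ 1)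
    (ha : 0 < a) (hb : 0 < b) (hG : ∀ t, HasDerivAt G (g t) t)
    (hg : ∀ t, 0 ≤ g t)
    (hbot : Filter.Tendsto G Filter.atBot (nhds 0))
    (htop : Filter.Tendsto G Filter.atTop (nhds 1)) :
    (∫ t : ℝ, (1 - (1 - α) * (1 - G t ^ a) ^ b) *
        (α * a * b * g t * G t ^ (a - 1) * (1 - G t ^ a) ^ (b - 1) /
          (1 - (1 - α) * (1 - G t ^ a) ^ b) ^ 2)) =
      -α * Real.log α / (1 - α) ∧
    ∀ v : ℕ, 2 ≤ v →
      (∫ t : ℝ, (1 - (1 - α) * (1 - G t ^ a) ^ b) ^ (v : ℕ) *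
          (α * a * b * g t * G t ^ (a - 1) * (1 - G t ^ a) ^ (b - 1) /
            (1 - (1 - α) * (1 - G t ^ a) ^ b) ^ 2)) =
        α * (1 - α ^ ((v : ℝ) - 1)) / ((1 - α) * ((v : ℝ) - 1)) := by
  have moment_eq (v : ℕ) :
      ∫ t : ℝ, (1 - (1 - α) * (1 - G t ^ a) ^ b) ^ v *
          (α * a * b * g t * G t ^ (a - 1) * (1 - G t ^ a) ^ (b - 1) /
            (1 - (1 - α) * (1 - G t ^ a) ^ b) ^ 2) =
        ∫ x in (0 : ℝ)..1, mokwTransform α a b x ^ v * mokwUniformDensity α a b x := by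
    rw [← integral_deriv_smul_comp_of_tendsto hG hg hbot htop]
    congr with t
    simp only [mokwTransform, mokwUniformDensity, smul_eq_mul]
    ring
  refine ⟨?_, fun v hv => ?_⟩
  · simpa only [pow_one, integral_mokwTransform_mul_mokwUniformDensity hα hα1 ha hb] using
      moment_eq 1
  · exact (moment_eq v).trans (integral_mokwTransform_pow_mul_mokwUniformDensity hα hα1 ha hb hv)

/-- Moments of `U = 1-(1-α)(1-G(T)^a)^b` when `T` has the MOKw-G density. -/
theorem stmt_10 (α a b : ℝ) (G g : ℝ → ℝ) (hα : 0 < α) (hα1 : α ≠ 1)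
    (ha : 0 < a) (hb : 0 < b) (hG : ∀ t, HasDerivAt G (g t) t)
    (hg : ∀ t, 0 ≤ g t) (hG01 : ∀ t, G t ∈ Set.Icc (0:ℝ) 1)
    (hbot : Filter.Tendsto G Filter.atBot (nhds 0))
    (htop : Filter.Tendsto G Filter.atTop (nhds 1)) :
    (∫ t : ℝ, (1 - (1 - α) * (1 - G t ^ a) ^ b) *
        (α * a * b * g t * G t ^ (a - 1) * (1 - G t ^ a) ^ (b - 1) /
          (1 - (1 - α) * (1 - G t ^ a) ^ b) ^ 2)) =
      -α * Real.log α / (1 - α) ∧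
    ∀ v : ℕ, 2 ≤ v →
      (∫ t : ℝ, (1 - (1 - α) * (1 - G t ^ a) ^ b) ^ (v : ℕ) *
          (α * a * b * g t * G t ^ (a - 1) * (1 - G t ^ a) ^ (b - 1) /
            (1 - (1 - α) * (1 - G t ^ a) ^ b) ^ 2)) =
        α * (1 - α ^ ((v : ℝ) - 1)) / ((1 - α) * ((v : ℝ) - 1)) :=
  stmt_10_general α a b G g hα hα1 ha hb hG hg hbot htop
end

section
/- Likelihood ratio ordering in the tilt parameter: if 0 < α₁ < α₂ and X, Y have MOKw-G densities f_{α₁}, f_{α₂} with the same a, b and baseline G, then the ratio f_{α₁}(t)/f_{α₂}(t) = (α₁/α₂)·((1-(1-α₂)(1-G(t)^a)^b)/(1-(1-α₁)(1-G(t)^a)^b))² is monotone nonincreasing in t on any interval where G is nondecreasing. -/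
/-- Likelihood-ratio ordering in the tilt parameter: the ratio
`f_{α₁}/f_{α₂}` is nonincreasing in `t` when `0 < α₁ < α₂`. -/
theorem stmt_12 (α₁ α₂ a b : ℝ) (G : ℝ → ℝ) (h1 : 0 < α₁) (h12 : α₁ < α₂)
    (ha : 0 < a) (hb : 0 < b) (hGmono : Monotone G)
    (hG01 : ∀ t, G t ∈ Set.Icc (0:ℝ) 1) :
    Antitone (fun t =>
      α₁ / α₂ * ((1 - (1 - α₂) * (1 - G t ^ a) ^ b) /
        (1 - (1 - α₁) * (1 - G t ^ a) ^ b)) ^ 2) := by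
  have h2 : 0 < α₂ := h1.trans h12
  -- properties of w t = (1 - G t ^ a) ^ b
  have hw01 : ∀ t, (1 - G t ^ a) ^ b ∈ Set.Icc (0:ℝ) 1 := by
    intro t
    obtain ⟨hg0, hg1⟩ := hG01 t
    have hga1 : G t ^ a ≤ 1 := Real.rpow_le_one hg0 hg1 ha.le
    have hga0 : (0:ℝ) ≤ G t ^ a := Real.rpow_nonneg hg0 a
    constructor
    · exact Real.rpow_nonneg (by linarith) b
    · exact Real.rpow_le_one (by linarith) (by linarith) hb.le
  have hwanti : ∀ s t, s ≤ t → (1 - G t ^ a) ^ b ≤ (1 - G s ^ a) ^ b := by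
    intro s t hst
    have hg0 := (hG01 s).1
    have hga : G s ^ a ≤ G t ^ a :=
      Real.rpow_le_rpow hg0 (hGmono hst) ha.le
    have hga1 : G t ^ a ≤ 1 := Real.rpow_le_one (hG01 t).1 (hG01 t).2 ha.le
    exact Real.rpow_le_rpow (by linarith) (by linarith) hb.le
  intro s t hst
  set ws := (1 - G s ^ a) ^ b with hws
  set wt := (1 - G t ^ a) ^ b with hwt
  obtain ⟨hws0, hws1⟩ := hw01 s
  obtain ⟨hwt0, hwt1⟩ := hw01 t
  have hwle : wt ≤ ws := hwanti s t hst
  -- denominators positive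
  have hD : ∀ α w : ℝ, 0 < α → 0 ≤ w → w ≤ 1 → 0 < 1 - (1 - α) * w := by
    intro α w hα hw0 hw1
    rcases le_or_gt α 1 with h | h
    · nlinarith
    · nlinarith
  have hD1s := hD α₁ ws h1 hws0 hws1
  have hD1t := hD α₁ wt h1 hwt0 hwt1
  have hN2s := hD α₂ ws h2 hws0 hws1
  have hN2t := hD α₂ wt h2 hwt0 hwt1
  -- ratio monotone in w
  have hratio : (1 - (1 - α₂) * wt) / (1 - (1 - α₁) * wt)
      ≤ (1 - (1 - α₂) * ws) / (1 - (1 - α₁) * ws) := by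
    rw [div_le_div_iff₀ hD1t hD1s]
    nlinarith [mul_nonneg (sub_nonneg.2 h12.le) (sub_nonneg.2 hwle)]
  have hnn : 0 ≤ (1 - (1 - α₂) * wt) / (1 - (1 - α₁) * wt) :=
    div_nonneg hN2t.le hD1t.le
  have hsq := pow_le_pow_left₀ hnn hratio 2
  have hc : 0 ≤ α₁ / α₂ := div_nonneg h1.le h2.le
  simp only
  exact mul_le_mul_of_nonneg_left hsq hc
end
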